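/- Let M be a pointed metric space and let Q : ℓ¹(M̃) → F(M) be the bounded linear map sending the standard basis vector e_{(x,y)} to the molecule m_{xy} = (δ(x) - δ(y))/d(x,y), where M̃ = {(x,y) ∈ M × M : x ≠ y}. Then Q is a quotient map: ‖Q‖ = 1 and Q maps the open unit ball of ℓ¹(M̃) onto the open unit ball of F(M). -/

import Mathlib

noncomputable section

open Metric Set

/-- The space of real-valued Lipschitz functions on `M` vanishing at `base`. -/
structure Lip0 (M : Type*) [MetricSpace M] (base : M) where
  toFun : M → ℝ
  exists_lip' : ∃ K, LipschitzWith K toFun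
  map_base' : toFun base = 0

namespace Lip0

variable {M : Type*} [MetricSpace M] {base : M}

instance : FunLike (Lip0 M base) M ℝ where
  coe := toFun
  coe_injective := by rintro ⟨f, _, _⟩ ⟨g, _, _⟩ h; simpa using h

@[simp] lemma map_base (f : Lip0 M base) : f base = 0 := f.map_base'

/-- The set of (nonnegative real) Lipschitz constants of `f`. -/
def lipSet (f : Lip0 M base) : Set ℝ :=
  {K | 0 ≤ K ∧ ∀ x y, |f x - f y| ≤ K * dist x y}

lemma lipSet_nonempty (f : Lip0 M base) : (lipSet f).Nonempty := by
  obtain ⟨K, hK⟩ := f.exists_lip'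
  exact ⟨K, K.coe_nonneg, fun x y => by
    have h := hK.dist_le_mul x y
    exact h⟩

lemma lipSet_bddBelow (f : Lip0 M base) : BddBelow (lipSet f) :=
  ⟨0, fun K hK => hK.1⟩

lemma sInf_mem_lipSet (f : Lip0 M base) : sInf (lipSet f) ∈ lipSet f := by
  constructor
  · exact le_csInf (lipSet_nonempty f) fun K hK => hK.1
  · intro x y
    rcases eq_or_ne x y with rfl | hxy
    · simp
    · have hd : 0 < dist x y := dist_pos.2 hxy
      rw [← div_le_iff₀ hd]
      exact le_csInf (lipSet_nonempty f) fun K hK => (div_le_iff₀ hd).2 (hK.2 x y)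

instance : Zero (Lip0 M base) :=
  ⟨⟨fun _ => 0, ⟨0, LipschitzWith.const 0⟩, rfl⟩⟩

instance : Add (Lip0 M base) :=
  ⟨fun f g => ⟨fun t => f t + g t, by
    obtain ⟨Kf, hf⟩ := f.exists_lip'; obtain ⟨Kg, hg⟩ := g.exists_lip'
    exact ⟨Kf + Kg, hf.add hg⟩, by simp⟩⟩

instance : Neg (Lip0 M base) :=
  ⟨fun f => ⟨fun t => -f t, by
    obtain ⟨Kf, hf⟩ := f.exists_lip'
    exact ⟨Kf, hf.neg⟩, by simp⟩⟩

def rsmul (c : ℝ) (f : Lip0 M base) : Lip0 M base :=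
  ⟨fun t => c * f t, by
    obtain ⟨Kf, hf⟩ := f.exists_lip'
    refine ⟨⟨|c|, abs_nonneg c⟩ * Kf, LipschitzWith.of_dist_le_mul fun x y => ?_⟩
    have h1 : dist (c * f x) (c * f y) = |c| * |f x - f y| := by
      rw [Real.dist_eq, ← abs_mul, mul_sub]
    have h2 := hf.dist_le_mul x y
    rw [Real.dist_eq] at h2
    rw [h1]
    calc |c| * |f x - f y| ≤ |c| * (Kf * dist x y) :=
          mul_le_mul_of_nonneg_left h2 (abs_nonneg c)
      _ = (⟨|c|, abs_nonneg c⟩ * Kf : NNReal) * dist x y := by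
          show _ = (|c| * (Kf : ℝ)) * dist x y; ring, by simp⟩

instance : SMul ℝ (Lip0 M base) := ⟨rsmul⟩
instance : SMul ℕ (Lip0 M base) := ⟨fun n => rsmul (n : ℝ)⟩
instance : SMul ℤ (Lip0 M base) := ⟨fun n => rsmul (n : ℝ)⟩
instance : Sub (Lip0 M base) := ⟨fun f g => f + -g⟩

@[simp] lemma coe_zero : ⇑(0 : Lip0 M base) = fun _ => 0 := rfl
@[simp] lemma coe_add (f g : Lip0 M base) : ⇑(f + g) = fun t => f t + g t := rfl
@[simp] lemma coe_neg (f : Lip0 M base) : ⇑(-f) = fun t => -f t := rfl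
@[simp] lemma coe_smul (c : ℝ) (f : Lip0 M base) : ⇑(c • f) = fun t => c * f t := rfl
@[simp] lemma coe_sub (f g : Lip0 M base) : ⇑(f - g) = fun t => f t - g t := by
  show (fun t => f t + -(g t)) = _
  funext t; ring

instance : AddCommGroup (Lip0 M base) :=
  (DFunLike.coe_injective (F := Lip0 M base)).addCommGroup _
    rfl (fun _ _ => rfl) (fun _ => rfl) (fun f g => coe_sub f g)
    (fun f n => by funext t; show (n : ℝ) * f t = n • f t; simp)
    (fun f n => by funext t; show (n : ℝ) * f t = n • f t; simp)

instance : Module ℝ (Lip0 M base) :=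
  (DFunLike.coe_injective (F := Lip0 M base)).module ℝ
    { toFun := fun f : Lip0 M base => ⇑f, map_zero' := rfl, map_add' := fun _ _ => rfl }
    (fun _ _ => rfl)

lemma lipSet_neg (f : Lip0 M base) : lipSet (-f) = lipSet f := by
  unfold lipSet
  ext K
  have e : ∀ x y : M, (-f) x - (-f) y = -(f x - f y) := fun x y => by
    show -f x - -f y = -(f x - f y); ring
  constructor <;> rintro ⟨h0, h⟩ <;> refine ⟨h0, fun x y => ?_⟩
  · have := h x y; rwa [e, abs_neg] at this
  · rw [e, abs_neg]; exact h x y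

instance : NormedAddCommGroup (Lip0 M base) :=
  AddGroupNorm.toNormedAddCommGroup
  { toFun := fun f => sInf (lipSet f)
    map_zero' := by
      apply le_antisymm
      · exact csInf_le (lipSet_bddBelow _) ⟨le_refl 0, fun x y => by simp⟩
      · exact (sInf_mem_lipSet (0 : Lip0 M base)).1
    add_le' := fun f g => by
      apply csInf_le (lipSet_bddBelow _)
      refine ⟨add_nonneg (sInf_mem_lipSet f).1 (sInf_mem_lipSet g).1, fun x y => ?_⟩
      have hf := (sInf_mem_lipSet f).2 x y
      have hg := (sInf_mem_lipSet g).2 x y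
      calc |(f + g) x - (f + g) y| = |(f x - f y) + (g x - g y)| := by
            simp [coe_add]; ring_nf
        _ ≤ |f x - f y| + |g x - g y| := abs_add_le _ _
        _ ≤ sInf (lipSet f) * dist x y + sInf (lipSet g) * dist x y := add_le_add hf hg
        _ = (sInf (lipSet f) + sInf (lipSet g)) * dist x y := by ring
    neg' := fun f => by show sInf (lipSet (-f)) = sInf (lipSet f); rw [lipSet_neg]
    eq_zero_of_map_eq_zero' := fun f hf => by
      have hf' : sInf (lipSet f) = 0 := hf
      apply DFunLike.coe_injective
      funext t
      have h := (sInf_mem_lipSet f).2 t base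
      rw [hf', zero_mul] at h
      have h0 : f t - f base = 0 := abs_nonpos_iff.1 h
      show f t = (0 : Lip0 M base) t
      have : (0 : Lip0 M base) t = 0 := rfl
      rw [this]
      simpa using h0 }

lemma norm_def (f : Lip0 M base) : ‖f‖ = sInf (lipSet f) := rfl

instance : NormedSpace ℝ (Lip0 M base) where
  norm_smul_le c f := by
    rw [norm_def, norm_def, Real.norm_eq_abs]
    apply csInf_le (lipSet_bddBelow _)
    refine ⟨mul_nonneg (abs_nonneg c) (sInf_mem_lipSet f).1, fun x y => ?_⟩
    have hf := (sInf_mem_lipSet f).2 x y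
    calc |(c • f) x - (c • f) y| = |c| * |f x - f y| := by
          rw [coe_smul]; rw [← abs_mul]; ring_nf
      _ ≤ |c| * (sInf (lipSet f) * dist x y) :=
          mul_le_mul_of_nonneg_left hf (abs_nonneg c)
      _ = |c| * sInf (lipSet f) * dist x y := by ring

lemma norm_apply_le (f : Lip0 M base) (x y : M) : |f x - f y| ≤ ‖f‖ * dist x y :=
  (sInf_mem_lipSet f).2 x y

end Lip0

open Lip0 NormedSpace

variable (M : Type*) [MetricSpace M]

/-- The Dirac evaluation functional at `x`. -/
def deltaF (base x : M) : StrongDual ℝ (Lip0 M base) :=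
  LinearMap.mkContinuous
    { toFun := fun f => f x
      map_add' := fun _ _ => rfl
      map_smul' := fun _ _ => rfl }
    (dist x base)
    (fun f => by
      have h := Lip0.norm_apply_le f x base
      simp only [Lip0.map_base, sub_zero] at h
      show |f x| ≤ dist x base * ‖f‖
      rw [mul_comm]; exact h)

variable {M}

@[simp] lemma deltaF_apply (base x : M) (f : Lip0 M base) : deltaF M base x f = f x := rfl

/-- The molecule `(δ x - δ y)/d(x,y)`. -/
def molecule (base x y : M) : StrongDual ℝ (Lip0 M base) :=
  (dist x y)⁻¹ • (deltaF M base x - deltaF M base y)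

variable (M) in
/-- The Lipschitz-free space over `M`, realized as the closed linear span of the Dirac
evaluations inside the dual of `Lip0 M base`. -/
def FreeSpace (base : M) : Submodule ℝ (StrongDual ℝ (Lip0 M base)) :=
  (Submodule.span ℝ (Set.range (deltaF M base))).topologicalClosure

/-- Port helper: the (unchanged) submodule norm on `FreeSpace M base`, registered directly so that
instance search finds the operator norm on maps into it. -/
instance FreeSpace.instSeminormedAddCommGroup (base : M) :
    SeminormedAddCommGroup ↥(FreeSpace M base) :=
  Submodule.seminormedAddCommGroup _

/-- Port helper: the (unchanged) submodule normed-space structure on `FreeSpace M base`. -/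
instance FreeSpace.instNormedSpace (base : M) : NormedSpace ℝ ↥(FreeSpace M base) :=
  Submodule.normedSpace _

variable (M) in
/-- The subspace of the free space generated by the Diracs of a subset `S ⊆ M`. -/
def FreeSpaceOn (base : M) (S : Set M) : Submodule ℝ (StrongDual ℝ (Lip0 M base)) :=
  (Submodule.span ℝ (deltaF M base '' S)).topologicalClosure

lemma deltaF_mem (base x : M) : deltaF M base x ∈ FreeSpace M base :=
  Submodule.le_topologicalClosure _ (Submodule.subset_span ⟨x, rfl⟩)

lemma molecule_mem (base x y : M) : molecule base x y ∈ FreeSpace M base :=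
  Submodule.smul_mem _ _ (Submodule.sub_mem _ (deltaF_mem base x) (deltaF_mem base y))

/-- The molecule as an element of the free space. -/
def mol (base x y : M) : ↥(FreeSpace M base) := ⟨molecule base x y, molecule_mem base x y⟩

/-- The "magic function" of Ivakhno, Kadets and Werner associated to the pair `(p, q)`,
with base point `o`. -/
def magicFun (o p q : M) (t : M) : ℝ :=
  (dist p q / 2) *
    ((dist t q - dist t p) / (dist t q + dist t p) -
      (dist o q - dist o p) / (dist o q + dist o p))

/-!
Molecules have norm at most one, so `‖Q‖ ≤ 1`, with equality witnessed at any pair `x ≠ y` by the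
1-Lipschitz function `t ↦ d(t, y)`. A functional `φ` on `F(M)` is evaluation at the Lipschitz
function `t ↦ φ (δ t)`, whose Lipschitz constant is the supremum of `φ` on molecules; hence, by
Hahn–Banach, every closed convex set containing the molecules contains the closed unit ball of
`F(M)`. So `Q` maps the closed unit ball of `ℓ¹` onto a dense subset of the closed unit ball, and
the successive approximation scheme from the proof of the open mapping theorem, run with sharp
constants, turns this into `Q (ball 0 1) = ball 0 1`.
-/

open Filter Topology

section OpenMapping

variable {𝕜 E F : Type*} [NormedField 𝕜] [NormedAddCommGroup E] [NormedSpace 𝕜 E] [CompleteSpace E]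
  [NormedAddCommGroup F] [NormedSpace 𝕜 F]

/-- Correcting the remainder `y - T x` again and again with tolerances `δ / 2 / 2 ^ n`, the
corrections form an absolutely summable series whose sum is an exact preimage. -/
theorem ContinuousLinearMap.exists_preimage_norm_le_add_of_approx (T : E →L[𝕜] F)
    (happrox : ∀ y : F, ∀ ε > 0, ∃ x, ‖x‖ ≤ ‖y‖ ∧ ‖y - T x‖ < ε) (y : F) {δ : ℝ} (hδ : 0 < δ) :
    ∃ x, T x = y ∧ ‖x‖ ≤ ‖y‖ + δ := by
  choose g hg_norm hg_approx using happrox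
  set ε : ℕ → ℝ := fun n => δ / 2 / 2 ^ n
  have hε_pos : ∀ n, 0 < ε n := fun n => by positivity
  have hε_sum : HasSum ε δ := hasSum_geometric_two' δ
  let r : ℕ → F := fun n => Nat.rec y (fun n z => z - T (g z (ε n) (hε_pos n))) n
  let u : ℕ → E := fun n => g (r n) (ε n) (hε_pos n)
  have hr_succ : ∀ n, r (n + 1) = r n - T (u n) := fun n => rfl
  have hr_lt : ∀ n, ‖r (n + 1)‖ < ε n := fun n => hg_approx _ _ _
  have hu_succ : ∀ n, ‖u (n + 1)‖ ≤ ε n := fun n => (hg_norm _ _ _).trans (hr_lt n).le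
  have hu : Summable u := (summable_nat_add_iff 1).1 (.of_norm_bounded hε_sum.summable hu_succ)
  refine ⟨∑' n, u n, ?_, ?_⟩
  · have hpartial : ∀ N, T (∑ n ∈ Finset.range N, u n) = y - r N := by
      intro N
      induction N with
      | zero => simp [r]
      | succ N ih => rw [Finset.sum_range_succ, map_add, ih, hr_succ]; abel
    have hr_lim : Tendsto r atTop (𝓝 0) := by
      rw [← tendsto_add_atTop_iff_nat 1]
      exact squeeze_zero_norm (fun n => (hr_lt n).le) hε_sum.summable.tendsto_atTop_zero
    have hlim := (T.continuous.tendsto _).comp hu.hasSum.tendsto_sum_nat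
    simp only [Function.comp_def, hpartial] at hlim
    simpa using tendsto_nhds_unique hlim (tendsto_const_nhds.sub hr_lim)
  · rw [hu.tsum_eq_zero_add]
    calc ‖u 0 + ∑' n, u (n + 1)‖ ≤ ‖u 0‖ + ‖∑' n, u (n + 1)‖ := norm_add_le _ _
      _ ≤ ‖y‖ + δ := add_le_add (hg_norm _ _ _) (tsum_of_norm_bounded hε_sum hu_succ)

end OpenMapping

section OpenMappingReal

variable {E F : Type*} [NormedAddCommGroup E] [NormedSpace ℝ E] [NormedAddCommGroup F]
  [NormedSpace ℝ F]

theorem ContinuousLinearMap.exists_approx_preimage_of_closedBall_subset (T : E →L[ℝ] F)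
    (h : closedBall 0 1 ⊆ closure (T '' closedBall 0 1)) (y : F) {ε : ℝ} (hε : 0 < ε) :
    ∃ x, ‖x‖ ≤ ‖y‖ ∧ ‖y - T x‖ < ε := by
  rcases eq_or_ne y 0 with rfl | hy
  · exact ⟨0, by simp, by simpa using hε⟩
  have hc : 0 < ‖y‖ := norm_pos_iff.2 hy
  have hy1 : ‖y‖⁻¹ • y ∈ closedBall (0 : F) 1 := by
    simp [norm_smul, inv_mul_cancel₀ hc.ne']
  obtain ⟨_, ⟨x, hx, rfl⟩, hxy⟩ := Metric.mem_closure_iff.1 (h hy1) (ε / ‖y‖) (div_pos hε hc)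
  refine ⟨‖y‖ • x, ?_, ?_⟩
  · simpa [norm_smul] using mul_le_mul_of_nonneg_left (mem_closedBall_zero_iff.1 hx) hc.le
  · have : y - T (‖y‖ • x) = ‖y‖ • (‖y‖⁻¹ • y - T x) := by
      rw [smul_sub, smul_inv_smul₀ hc.ne', map_smul]
    rw [this, norm_smul, norm_norm, ← dist_eq_norm, ← lt_div_iff₀' hc]
    exact hxy

theorem ContinuousLinearMap.ball_subset_image_ball_of_closedBall_subset_closure [CompleteSpace E]
    (T : E →L[ℝ] F) (h : closedBall 0 1 ⊆ closure (T '' closedBall 0 1)) :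
    ball 0 1 ⊆ T '' ball 0 1 := by
  intro y hy
  rw [mem_ball_zero_iff] at hy
  obtain ⟨x, rfl, hx⟩ := T.exists_preimage_norm_le_add_of_approx
    (fun y ε hε => T.exists_approx_preimage_of_closedBall_subset h y hε) y
    (half_pos (sub_pos.2 hy))
  exact ⟨x, mem_ball_zero_iff.2 (by linarith), rfl⟩

end OpenMappingReal

section LpOne

open scoped lp

variable {ι 𝕜 E : Type*} [NontriviallyNormedField 𝕜] [NormedAddCommGroup E] [NormedSpace 𝕜 E]
  {v : ι → E} {C : ℝ}

lemma lp.hasSum_norm_one (a : ℓ¹(ι, 𝕜)) : HasSum (fun i => ‖a i‖) ‖a‖ := by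
  simpa using lp.hasSum_norm (p := 1) (by norm_num) a

lemma lp.norm_smul_le_of_norm_le (hv : ∀ i, ‖v i‖ ≤ C) (a : ℓ¹(ι, 𝕜)) (i : ι) :
    ‖a i • v i‖ ≤ C * ‖a i‖ :=
  (norm_smul_le _ _).trans (by rw [mul_comm]; gcongr; exact hv i)

variable [CompleteSpace E]

lemma lp.summable_smul_of_norm_le (hv : ∀ i, ‖v i‖ ≤ C) (a : ℓ¹(ι, 𝕜)) :
    Summable fun i => a i • v i :=
  .of_norm_bounded ((lp.hasSum_norm_one a).summable.mul_left C) (lp.norm_smul_le_of_norm_le hv a)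

def lp.tsumSmulCLM (hv : ∀ i, ‖v i‖ ≤ C) : ℓ¹(ι, 𝕜) →L[𝕜] E :=
  LinearMap.mkContinuous
    { toFun a := ∑' i, a i • v i
      map_add' a b := by
        simp only [lp.coeFn_add, Pi.add_apply, add_smul]
        exact (lp.summable_smul_of_norm_le hv a).tsum_add (lp.summable_smul_of_norm_le hv b)
      map_smul' c a := by
        simp only [lp.coeFn_smul, Pi.smul_apply, smul_assoc, RingHom.id_apply]
        exact (lp.summable_smul_of_norm_le hv a).tsum_const_smul c }
    C fun a => tsum_of_norm_bounded ((lp.hasSum_norm_one a).mul_left C)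
      (lp.norm_smul_le_of_norm_le hv a)

lemma lp.tsumSmulCLM_apply (hv : ∀ i, ‖v i‖ ≤ C) (a : ℓ¹(ι, 𝕜)) :
    lp.tsumSmulCLM hv a = ∑' i, a i • v i :=
  rfl

lemma lp.norm_tsumSmulCLM_le (hv : ∀ i, ‖v i‖ ≤ C) (hC : 0 ≤ C) :
    ‖(lp.tsumSmulCLM hv : ℓ¹(ι, 𝕜) →L[𝕜] E)‖ ≤ C :=
  LinearMap.mkContinuous_norm_le _ hC _

lemma lp.tsumSmulCLM_single [DecidableEq ι] (hv : ∀ i, ‖v i‖ ≤ C) (i : ι) :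
    lp.tsumSmulCLM hv (lp.single 1 i (1 : 𝕜)) = v i := by
  have hzero : ∀ j ≠ i, lp.single (E := fun _ => 𝕜) 1 i 1 j • v j = 0 := fun j hj => by
    rw [lp.single_apply_ne 1 i _ hj, zero_smul]
  rw [lp.tsumSmulCLM_apply, tsum_eq_single i hzero, lp.single_apply_self, one_smul]

end LpOne

namespace Lip0

variable {base : M}

def ofLipschitzBound (g : M → ℝ) (hg0 : g base = 0) {K : ℝ} (hK : 0 ≤ K)
    (hg : ∀ x y, |g x - g y| ≤ K * dist x y) : Lip0 M base :=
  ⟨g, ⟨⟨K, hK⟩, LipschitzWith.of_dist_le_mul fun x y => by rw [Real.dist_eq]; exact hg x y⟩, hg0⟩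

@[simp] lemma ofLipschitzBound_apply (g : M → ℝ) (hg0 : g base = 0) {K : ℝ} (hK : 0 ≤ K)
    (hg : ∀ x y, |g x - g y| ≤ K * dist x y) (t : M) :
    ofLipschitzBound g hg0 hK hg t = g t :=
  rfl

lemma norm_ofLipschitzBound_le (g : M → ℝ) (hg0 : g base = 0) {K : ℝ} (hK : 0 ≤ K)
    (hg : ∀ x y, |g x - g y| ≤ K * dist x y) : ‖ofLipschitzBound g hg0 hK hg‖ ≤ K :=
  csInf_le (lipSet_bddBelow _) ⟨hK, hg⟩

end Lip0

section Molecules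

variable {base : M}

lemma molecule_apply (x y : M) (f : Lip0 M base) :
    molecule base x y f = (dist x y)⁻¹ * (f x - f y) :=
  rfl

lemma norm_mol_le (x y : M) : ‖mol base x y‖ ≤ 1 := by
  refine ContinuousLinearMap.opNorm_le_bound (molecule base x y) zero_le_one fun f => ?_
  rw [molecule_apply, Real.norm_eq_abs, abs_mul, abs_inv, abs_dist, one_mul]
  rcases eq_or_ne x y with rfl | hxy
  · simp
  · rw [inv_mul_le_iff₀ (dist_pos.2 hxy), mul_comm]
    exact norm_apply_le f x y

lemma norm_mol {x y : M} (hxy : x ≠ y) : ‖mol base x y‖ = 1 := by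
  refine le_antisymm (norm_mol_le x y) ?_
  set f : Lip0 M base := ofLipschitzBound (fun t => dist t y - dist base y) (sub_self _)
    zero_le_one fun a b => by rw [one_mul, sub_sub_sub_cancel_right]; exact abs_dist_sub_le a b y
  have hf : molecule base x y f = 1 := by
    simp [f, molecule_apply, inv_mul_cancel₀ (dist_pos.2 hxy).ne']
  calc (1 : ℝ) = ‖molecule base x y f‖ := by rw [hf, norm_one]
    _ ≤ ‖molecule base x y‖ * ‖f‖ := ContinuousLinearMap.le_opNorm _ _
    _ ≤ ‖molecule base x y‖ * 1 := by gcongr; exact norm_ofLipschitzBound_le _ _ _ _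
    _ = ‖mol base x y‖ := mul_one _

lemma mol_self (x : M) : mol base x x = 0 := by
  ext1
  simp [mol, molecule]

lemma mol_swap (x y : M) : mol base y x = -mol base x y := by
  ext1
  simp only [mol, molecule, dist_comm y x, Submodule.coe_neg]
  rw [← neg_sub, smul_neg]

end Molecules

namespace FreeSpace

variable {base : M}

instance : CompleteSpace (FreeSpace M base) :=
  (Submodule.isClosed_topologicalClosure _).completeSpace_coe

variable (base) in
def dirac (x : M) : FreeSpace M base := ⟨deltaF M base x, deltaF_mem base x⟩

@[simp] lemma dirac_base : dirac base base = 0 := by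
  ext1; ext f; simp [dirac]

lemma dirac_sub_dirac (x y : M) : dirac base x - dirac base y = dist x y • mol base x y := by
  rcases eq_or_ne x y with rfl | hxy
  · simp
  · ext1
    simp [dirac, mol, molecule, smul_smul, mul_inv_cancel₀ (dist_pos.2 hxy).ne']

lemma dense_span_dirac :
    Dense (Submodule.span ℝ (range (dirac base)) : Set (FreeSpace M base)) := by
  refine Topology.IsInducing.subtypeVal.dense_iff.2 fun ν => ?_
  change ν.1 ∈ closure ((FreeSpace M base).subtype '' _)
  rw [← Submodule.map_coe, Submodule.map_span, ← range_comp]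
  exact ν.2

lemma ext_dirac {F : Type*} [NormedAddCommGroup F] [NormedSpace ℝ F]
    {S T : FreeSpace M base →L[ℝ] F} (h : ∀ x, S (dirac base x) = T (dirac base x)) : S = T :=
  ContinuousLinearMap.ext_on dense_span_dirac (forall_mem_range.2 h)

lemma abs_apply_dirac_sub_le {φ : StrongDual ℝ (FreeSpace M base)} {u : ℝ}
    (h : ∀ x y, φ (mol base x y) ≤ u) (x y : M) :
    |φ (dirac base x) - φ (dirac base y)| ≤ u * dist x y := by
  rw [← map_sub, dirac_sub_dirac, map_smul, smul_eq_mul, abs_mul, abs_dist, mul_comm]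
  gcongr
  refine abs_le.2 ⟨?_, h x y⟩
  exact neg_le.1 (by simpa [mol_swap x y] using h y x)

/-- A functional on `F(M)` is evaluation at the Lipschitz function `t ↦ φ (δ t)`. -/
lemma norm_dual_le_of_apply_mol_le {φ : StrongDual ℝ (FreeSpace M base)} {u : ℝ}
    (h : ∀ x y, φ (mol base x y) ≤ u) : ‖φ‖ ≤ u := by
  have hu : 0 ≤ u := by simpa [mol_self] using h base base
  set f : Lip0 M base := ofLipschitzBound (fun t => φ (dirac base t)) (by simp) hu
    (abs_apply_dirac_sub_le h)
  have hφ : φ = (ContinuousLinearMap.apply ℝ ℝ f).comp (FreeSpace M base).subtypeL :=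
    ext_dirac fun _ => rfl
  refine ContinuousLinearMap.opNorm_le_bound _ hu fun ν => ?_
  calc ‖φ ν‖ = ‖(ν : StrongDual ℝ (Lip0 M base)) f‖ := by rw [hφ]; rfl
    _ ≤ ‖ν‖ * ‖f‖ := ContinuousLinearMap.le_opNorm _ _
    _ ≤ ‖ν‖ * u := by gcongr; exact norm_ofLipschitzBound_le _ _ _ _
    _ = u * ‖ν‖ := mul_comm _ _

lemma closedBall_subset_of_mol_mem {K : Set (FreeSpace M base)} (hconv : Convex ℝ K)
    (hclosed : IsClosed K) (hmol : ∀ x y, mol base x y ∈ K) : closedBall 0 1 ⊆ K := by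
  intro ν hν
  by_contra hνK
  obtain ⟨φ, u, hφK, huν⟩ := geometric_hahn_banach_closed_point hconv hclosed hνK
  have hφ : ‖φ‖ ≤ u := norm_dual_le_of_apply_mol_le fun x y => (hφK _ (hmol x y)).le
  have hν1 : ‖ν‖ ≤ 1 := by simpa using hν
  have : φ ν ≤ u :=
    calc φ ν ≤ ‖φ‖ * ‖ν‖ := (le_abs_self _).trans (φ.le_opNorm ν)
      _ ≤ ‖φ‖ := mul_le_of_le_one_right (norm_nonneg _) hν1
      _ ≤ u := hφ
  linarith

end FreeSpace

open scoped Classical in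
/-- Lemma 1 (folklore): the canonical map `Q : ℓ¹(M̃) → F(M)` sending `e_{(x,y)}` to the
molecule `m_{xy}` has norm one and maps the open unit ball onto the open unit ball. -/
theorem stmt_5 {M : Type*} [MetricSpace M] (base : M) (hM : ∃ x y : M, x ≠ y) :
    ∃ Q : lp (fun _ : {pq : M × M // pq.1 ≠ pq.2} => ℝ) 1 →L[ℝ] ↥(FreeSpace M base),
      (∀ pq : {pq : M × M // pq.1 ≠ pq.2},
        ((Q (lp.single 1 pq 1) : StrongDual ℝ (Lip0 M base))) = molecule base pq.1.1 pq.1.2) ∧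
      ‖Q‖ = 1 ∧ Q '' Metric.ball 0 1 = Metric.ball 0 1 := by
  have hv : ∀ pq : {pq : M × M // pq.1 ≠ pq.2}, ‖mol base pq.1.1 pq.1.2‖ ≤ 1 :=
    fun _ => norm_mol_le _ _
  set Q := lp.tsumSmulCLM (𝕜 := ℝ) hv
  have hQ_single : ∀ pq, Q (lp.single 1 pq 1) = mol base pq.1.1 pq.1.2 := lp.tsumSmulCLM_single hv
  have hQ_le : ‖Q‖ ≤ 1 := lp.norm_tsumSmulCLM_le hv zero_le_one
  have hmol_mem : ∀ x y, mol base x y ∈ closure (Q '' closedBall 0 1) := by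
    intro x y
    apply subset_closure
    rcases eq_or_ne x y with rfl | hxy
    · exact ⟨0, by simp, by rw [map_zero, mol_self]⟩
    · exact ⟨lp.single 1 ⟨(x, y), hxy⟩ 1, by simp [lp.norm_single], hQ_single _⟩
  obtain ⟨x, y, hxy⟩ := hM
  refine ⟨Q, fun pq => congrArg Subtype.val (hQ_single pq), le_antisymm hQ_le ?_, ?_⟩
  · have h := Q.le_opNorm (lp.single 1 (⟨(x, y), hxy⟩ : {pq : M × M // pq.1 ≠ pq.2}) (1 : ℝ))
    rwa [hQ_single, norm_mol hxy, lp.norm_single one_pos, norm_one, mul_one] at h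
  · refine (image_subset_iff.2 fun a ha => ?_).antisymm
      (Q.ball_subset_image_ball_of_closedBall_subset_closure
        (FreeSpace.closedBall_subset_of_mol_mem
          ((convex_closedBall 0 1).linear_image Q.toLinearMap).closure isClosed_closure hmol_mem))
    exact mem_ball_zero_iff.2 ((Q.le_of_opNorm_le hQ_le a).trans_lt (by simpa using ha))
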